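/- arXiv:1406.3840 — 3 statements merged into one kernel-verified Lean document; each statement's English description precedes it below -/
import Mathlib

section
/- Let $0 < \nu_1 < \nu_2 < \cdots < \nu_K$ be positive reals and define the allocation $M^*_k = \min\{1 - \sum_{i=1}^{k-1} M^*_i,\ \nu_k\}$ recursively. Then $M^*$ is feasible, i.e., $M^*_k \geq 0$ for all $k$ and $\sum_{k=1}^K M^*_k \leq 1$, and $M^*$ maximises $\sum_{k=1}^K \min\{1, M_k/\nu_k\}$ over all nonnegative vectors $M$ with $\sum_{k=1}^K M_k \leq 1$. -/
/-!
The reward `x ↦ min 1 (x / ν)` is concave, and the greedy allocation satisfies the KKT conditions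
of the concave program with the multiplier `μ = 1 / ν m`, where `m` is the first job that cannot be
funded in full (or `μ = 0` if there is none): jobs before `m` are easier and fully funded, jobs after
`m` are harder and get nothing, and whenever such an `m` exists the whole budget is spent.
Summing the supergradient inequalities
`min 1 (M k / ν k) ≤ min 1 (M* k / ν k) + μ (M k - M* k)` over `k` gives optimality.
-/

open Finset

/-- Cumulative sum of the greedy allocation: `allocSum ν k = ∑_{i<k} M*_i`. -/
def allocSum (ν : ℕ → ℝ) : ℕ → ℝ
  | 0 => 0
  | k + 1 => allocSum ν k + min (1 - allocSum ν k) (ν k)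

/-- The greedy allocation `M*_k = min (1 - ∑_{i<k} M*_i) (ν k)` (0-indexed). -/
def Mstar (ν : ℕ → ℝ) (k : ℕ) : ℝ := min (1 - allocSum ν k) (ν k)

theorem sum_range_Mstar (ν : ℕ → ℝ) (k : ℕ) : ∑ i ∈ range k, Mstar ν i = allocSum ν k := by
  induction k with
  | zero => simp [allocSum]
  | succ n ih => rw [sum_range_succ, ih]; rfl

theorem allocSum_le_one (ν : ℕ → ℝ) : ∀ k, allocSum ν k ≤ 1
  | 0 => zero_le_one
  | k + 1 => by
    have := min_le_left (1 - allocSum ν k) (ν k)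
    rw [allocSum]
    linarith

theorem Mstar_nonneg {ν : ℕ → ℝ} {k : ℕ} (hν : 0 ≤ ν k) : 0 ≤ Mstar ν k :=
  le_min (sub_nonneg.2 (allocSum_le_one ν k)) hν

theorem allocSum_eq_one_of_Mstar_lt {ν : ℕ → ℝ} {m k : ℕ} (hm : Mstar ν m < ν m) (hmk : m < k)
    (hν : ∀ j < k, 0 ≤ ν j) : allocSum ν k = 1 := by
  induction k, hmk using Nat.le_induction with
  | base =>
    rw [allocSum, min_eq_left (le_of_not_ge fun h => hm.ne (min_eq_right h))]
    ring
  | succ j hj ih =>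
    rw [allocSum, ih fun i hi => hν i (by omega), sub_self, min_eq_left (hν j (by omega))]
    ring

theorem Mstar_eq_zero_of_Mstar_lt {ν : ℕ → ℝ} {m k : ℕ} (hm : Mstar ν m < ν m) (hmk : m < k)
    (hν : ∀ j ≤ k, 0 ≤ ν j) : Mstar ν k = 0 := by
  rw [Mstar, allocSum_eq_one_of_Mstar_lt hm hmk fun j hj => hν j hj.le, sub_self,
    min_eq_left (hν k le_rfl)]

theorem min_one_div_le_add_mul_sub {ν c x μ : ℝ} (hν : 0 < ν) (hx : 0 ≤ x) (hcν : c ≤ ν)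
    (hμ : 0 ≤ μ) (hlow : c < ν → 1 / ν ≤ μ) (hhigh : 0 < c → μ ≤ 1 / ν) :
    min 1 (x / ν) ≤ min 1 (c / ν) + μ * (x - c) := by
  have hc : min 1 (c / ν) = c / ν := min_eq_right ((div_le_one hν).2 hcν)
  have hlin : x / ν = c / ν + 1 / ν * (x - c) := by field_simp; ring
  rw [hc]
  rcases le_or_gt c x with hxc | hxc
  · rcases hcν.lt_or_eq with hlt | heq
    · calc min 1 (x / ν) ≤ x / ν := min_le_right _ _
        _ ≤ c / ν + μ * (x - c) := by
          rw [hlin]; gcongr; exact hlow hlt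
    · rw [heq, div_self hν.ne']
      nlinarith [min_le_left 1 (x / ν)]
  · calc min 1 (x / ν) ≤ x / ν := min_le_right _ _
      _ ≤ c / ν + μ * (x - c) := by
        rw [hlin]; nlinarith [hhigh (hx.trans_lt hxc)]

theorem sum_min_one_div_le_of_kkt {ι : Type*} {s : Finset ι} {ν M c : ι → ℝ} {μ : ℝ}
    (hν : ∀ i ∈ s, 0 < ν i) (hM : ∀ i ∈ s, 0 ≤ M i) (hMs : ∑ i ∈ s, M i ≤ 1)
    (hcν : ∀ i ∈ s, c i ≤ ν i) (hμ : 0 ≤ μ)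
    (hlow : ∀ i ∈ s, c i < ν i → 1 / ν i ≤ μ) (hhigh : ∀ i ∈ s, 0 < c i → μ ≤ 1 / ν i)
    (hslack : μ * (1 - ∑ i ∈ s, c i) = 0) :
    ∑ i ∈ s, min 1 (M i / ν i) ≤ ∑ i ∈ s, min 1 (c i / ν i) :=
  calc ∑ i ∈ s, min 1 (M i / ν i)
      ≤ ∑ i ∈ s, (min 1 (c i / ν i) + μ * (M i - c i)) := sum_le_sum fun i hi =>
        min_one_div_le_add_mul_sub (hν i hi) (hM i hi) (hcν i hi) hμ (hlow i hi) (hhigh i hi)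
    _ = ∑ i ∈ s, min 1 (c i / ν i) + μ * (∑ i ∈ s, M i - 1) + μ * (1 - ∑ i ∈ s, c i) := by
        rw [sum_add_distrib, ← mul_sum, sum_sub_distrib]; ring
    _ ≤ ∑ i ∈ s, min 1 (c i / ν i) := by
        rw [hslack]; nlinarith

theorem exists_multiplier_Mstar {K : ℕ} {ν : ℕ → ℝ} (hpos : ∀ k, k < K → 0 < ν k)
    (hmono : ∀ i j, i < j → j < K → ν i < ν j) :
    ∃ μ : ℝ, 0 ≤ μ ∧ μ * (1 - ∑ k ∈ range K, Mstar ν k) = 0 ∧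
      ∀ k < K, (Mstar ν k < ν k → 1 / ν k ≤ μ) ∧ (0 < Mstar ν k → μ ≤ 1 / ν k) := by
  have hle : ∀ i j, i ≤ j → j < K → ν i ≤ ν j := fun i j hij hj =>
    hij.eq_or_lt.elim (fun h => h ▸ le_rfl) fun h => (hmono i j h hj).le
  by_cases hex : ∃ m, m < K ∧ Mstar ν m < ν m
  · obtain ⟨hmK, hm⟩ := Nat.find_spec hex
    set m := Nat.find hex
    have hνm := hpos m hmK
    refine ⟨1 / ν m, by positivity, ?_, fun k hk => ⟨fun hpart => ?_, fun hfunded => ?_⟩⟩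
    · rw [sum_range_Mstar, allocSum_eq_one_of_Mstar_lt hm (by omega) fun j hj => (hpos j hj).le,
        sub_self, mul_zero]
    · exact one_div_le_one_div_of_le hνm (hle m k (Nat.find_min' hex ⟨hk, hpart⟩) hk)
    · have hkm : k ≤ m := le_of_not_gt fun hmk => hfunded.ne'
        (Mstar_eq_zero_of_Mstar_lt hm hmk fun j hj => (hpos j (by omega)).le)
      exact one_div_le_one_div_of_le (hpos k hk) (hle k m hkm hmK)
  · push Not at hex
    exact ⟨0, le_rfl, zero_mul _, fun k hk =>
      ⟨fun h => absurd h (not_lt.2 (hex k hk)), fun _ => (one_div_pos.2 (hpos k hk)).le⟩⟩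

theorem stmt0 (K : ℕ) (ν : ℕ → ℝ)
    (hpos : ∀ k, k < K → 0 < ν k)
    (hmono : ∀ i j, i < j → j < K → ν i < ν j) :
    (∀ k, k < K → 0 ≤ Mstar ν k) ∧
    (∑ k ∈ range K, Mstar ν k ≤ 1) ∧
    (∀ M : ℕ → ℝ, (∀ k, k < K → 0 ≤ M k) → (∑ k ∈ range K, M k ≤ 1) →
      ∑ k ∈ range K, min 1 (M k / ν k) ≤ ∑ k ∈ range K, min 1 (Mstar ν k / ν k)) := by
  refine ⟨fun k hk => Mstar_nonneg (hpos k hk).le,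
    sum_range_Mstar ν K ▸ allocSum_le_one ν K, fun M hM hMs => ?_⟩
  obtain ⟨μ, hμ, hslack, hkkt⟩ := exists_multiplier_Mstar hpos hmono
  exact sum_min_one_div_le_of_kkt (fun k hk => hpos k (mem_range.1 hk))
    (fun k hk => hM k (mem_range.1 hk)) hMs (fun k _ => min_le_right _ _) hμ
    (fun k hk => (hkkt k (mem_range.1 hk)).1) (fun k hk => (hkkt k (mem_range.1 hk)).2) hslack
end

section
/- Let $X_1, \ldots, X_n$ be a martingale difference sequence adapted to a filtration $\{\mathcal{F}_t\}$ (i.e., $\mathbb{E}[X_t \mid \mathcal{F}_{t-1}] = 0$), and let $R_t$ be $\mathcal{F}_{t-1}$-measurable with $X_t \leq R_t$ almost surely. Set $R = \max_{t \leq n} R_t$ and $V^2 = \sum_{t=1}^n \mathrm{Var}[X_t \mid \mathcal{F}_{t-1}]$. Then for any $\epsilon, r, v > 0$: $\Pr\left[\sum_{t=1}^n X_t \geq \epsilon,\ V^2 \leq v,\ R \leq r\right] \leq \exp\left(-\frac{\epsilon^2}{2v + \frac{2\epsilon r}{3}}\right)$. -/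
/-!
Freedman's exponential supermartingale argument. For `l ≥ 0` with `l r < 3` one has
`exp (l x) ≤ 1 + l x + c x²` for all `x ≤ r`, where `c = 3 l² / (2 (3 - l r))`. Conditioning on
`ℱ_{t-1}` and using `E[X_t | ℱ_{t-1}] = 0`, the factor `𝟙{R_t ≤ r} exp (l X_t - c W_t)`, with
`W_t = E[X_t² | ℱ_{t-1}]`, has conditional expectation at most `(1 + c W_t) exp (-c W_t) ≤ 1`.
So the product `M_k` of these factors has `E M_n ≤ M_0 = 1`. On the event in question
`M_n ≥ exp (l ε - c v)`, and Markov's inequality with `l = 3ε / (3v + εr)` gives the bound.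
-/

open MeasureTheory Finset Real

theorem apply_le_apply_zero_of_hasDerivAt_nonpos {g g' : ℝ → ℝ}
    (hg : ∀ x, HasDerivAt g (g' x) x) (hg' : ∀ x, 0 < x → g' x ≤ 0) {u : ℝ} (hu : 0 ≤ u) :
    g u ≤ g 0 :=
  antitoneOn_of_hasDerivWithinAt_nonpos (convex_Ici 0)
    (fun x _ => (hg x).continuousAt.continuousWithinAt)
    (fun x _ => (hg x).hasDerivWithinAt)
    (fun x hx => hg' x (by simpa using hx)) Set.self_mem_Ici hu hu

namespace Real

theorem exp_le_one_add_add_sq_div_two_of_nonpos {x : ℝ} (hx : x ≤ 0) :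
    exp x ≤ 1 + x + x ^ 2 / 2 := by
  have hmono : Monotone fun y => exp y - y - y ^ 2 / 2 :=
    monotone_of_hasDerivAt_nonneg (f' := fun y => exp y - 1 - y)
      (fun y => (((hasDerivAt_exp y).sub (hasDerivAt_id y)).sub
        ((hasDerivAt_pow 2 y).div_const 2)).congr_deriv (by simp))
      fun y => by simp only [Pi.zero_apply]; linarith [add_one_le_exp y]
  have := hmono hx
  simp only [exp_zero] at this
  linarith

theorem two_sub_mul_exp_le {x : ℝ} (hx : 0 ≤ x) : (2 - x) * exp x ≤ 2 + x := by
  have := apply_le_apply_zero_of_hasDerivAt_nonpos (g := fun y => (2 - y) * exp y - y)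
    (fun y => ((((hasDerivAt_id y).const_sub 2).mul (hasDerivAt_exp y)).sub
      (hasDerivAt_id y)).congr_deriv rfl)
    (fun y _ => by
      have h := mul_le_mul_of_nonneg_right (one_sub_le_exp_neg y) (exp_pos y).le
      rw [← exp_add, neg_add_cancel, exp_zero] at h
      simp only [id]; linarith) hx
  simp only [exp_zero] at this
  linarith

theorem three_sub_mul_exp_sub_one_sub_le {x : ℝ} (hx : 0 ≤ x) :
    (3 - x) * (exp x - 1 - x) ≤ 3 / 2 * x ^ 2 := by
  have := apply_le_apply_zero_of_hasDerivAt_nonpos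
    (g := fun y => (3 - y) * (exp y - 1 - y) - 3 / 2 * y ^ 2)
    (fun y => ((((hasDerivAt_id y).const_sub 3).mul
      (((hasDerivAt_exp y).sub_const 1).sub (hasDerivAt_id y))).sub
      ((hasDerivAt_pow 2 y).const_mul (3 / 2))).congr_deriv rfl)
    (fun y hy => by
      simp only [Pi.sub_apply, id]; push_cast
      linarith [two_sub_mul_exp_le hy.le]) hx
  simp only [exp_zero] at this
  linarith

theorem exp_le_one_add_add_mul_sq {u w : ℝ} (huw : u ≤ w) (hw0 : 0 ≤ w) (hw3 : w < 3) :
    exp u ≤ 1 + u + 3 / (2 * (3 - w)) * u ^ 2 := by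
  have h3w : 0 < 3 - w := by linarith
  have hK : (3 - w) * (3 / (2 * (3 - w))) = 3 / 2 := by field_simp
  rcases le_or_gt u 0 with hu | hu
  · have : 1 / 2 ≤ 3 / (2 * (3 - w)) := by rw [le_div_iff₀ (by positivity)]; linarith
    nlinarith [exp_le_one_add_add_sq_div_two_of_nonpos hu, sq_nonneg u]
  · have : (3 - w) * (exp u - 1 - u) ≤ (3 - w) * (3 / (2 * (3 - w)) * u ^ 2) := by
      rw [← mul_assoc, hK]
      exact le_trans (by nlinarith [add_one_le_exp u]) (three_sub_mul_exp_sub_one_sub_le hu.le)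
    linarith [le_of_mul_le_mul_left this h3w]

end Real

noncomputable section Bernstein

variable {Ω : Type*} {m m0 : MeasurableSpace Ω} {μ : Measure Ω}

def bernsteinFactor (μ : Measure Ω) (m : MeasurableSpace Ω) (Y ρ : Ω → ℝ) (l c r : ℝ) :
    Ω → ℝ :=
  {ω | ρ ω ≤ r}.indicator fun ω => exp (l * Y ω - c * μ[Y ^ 2|m] ω)

lemma bernsteinFactor_nonneg {Y ρ : Ω → ℝ} {l c r : ℝ} (ω : Ω) :
    0 ≤ bernsteinFactor μ m Y ρ l c r ω :=
  Set.indicator_nonneg (fun _ _ => (exp_pos _).le) ω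

lemma ae_bernsteinFactor_le {Y ρ : Ω → ℝ} {l c r : ℝ} (hl : 0 ≤ l) (hc : 0 ≤ c)
    (hYρ : ∀ᵐ ω ∂μ, Y ω ≤ ρ ω) : ∀ᵐ ω ∂μ, bernsteinFactor μ m Y ρ l c r ω ≤ exp (l * r) := by
  filter_upwards [hYρ, condExp_nonneg (m := m) (μ := μ) (f := Y ^ 2)
    (ae_of_all _ fun ω => sq_nonneg (Y ω))] with ω hYω hW
  by_cases hω : ω ∈ {ω | ρ ω ≤ r}
  · rw [bernsteinFactor, Set.indicator_of_mem hω, exp_le_exp]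
    nlinarith [mul_nonneg hc (hW : 0 ≤ μ[Y ^ 2|m] ω), show ρ ω ≤ r from hω]
  · rw [bernsteinFactor, Set.indicator_of_notMem hω]
    exact (exp_pos _).le

lemma stronglyMeasurable_bernsteinFactor {m' : MeasurableSpace Ω} {Y ρ : Ω → ℝ} {l c r : ℝ}
    (hm : m ≤ m') (hY : StronglyMeasurable[m'] Y) (hρ : StronglyMeasurable[m] ρ) :
    StronglyMeasurable[m'] (bernsteinFactor μ m Y ρ l c r) :=
  (continuous_exp.comp_stronglyMeasurable
    ((hY.const_mul l).sub ((stronglyMeasurable_condExp.mono hm).const_mul c))).indicator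
    (hm _ (hρ.measurable measurableSet_Iic))

theorem integral_mul_condExp_of_bound [IsFiniteMeasure μ] (hm : m ≤ m0) {f g : Ω → ℝ}
    (hf : StronglyMeasurable[m] f) (hg : Integrable g μ) (B : ℝ) (hfB : ∀ᵐ ω ∂μ, ‖f ω‖ ≤ B) :
    ∫ ω, f ω * μ[g|m] ω ∂μ = ∫ ω, f ω * g ω ∂μ := by
  rw [← integral_condExp hm (f := fun ω => f ω * g ω)]
  exact integral_congr_ae (condExp_stronglyMeasurable_mul_of_bound hm hf hg B hfB).symm

theorem condExp_one_add_mul_add_mul_sq [IsFiniteMeasure μ] (hm : m ≤ m0) {Y : Ω → ℝ}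
    (hY : MemLp Y 2 μ) (hY0 : μ[Y|m] =ᵐ[μ] 0) (l c : ℝ) :
    μ[fun ω => 1 + l * Y ω + c * Y ω ^ 2|m] =ᵐ[μ] fun ω => 1 + c * μ[Y ^ 2|m] ω := by
  have hYi : Integrable Y μ := hY.integrable one_le_two
  have hY2 : Integrable (Y ^ 2) μ := hY.integrable_sq
  have hq : (fun ω => 1 + l * Y ω + c * Y ω ^ 2) = (fun _ => (1 : ℝ)) + (l • Y + c • Y ^ 2) := by
    ext ω; simp only [Pi.add_apply, Pi.smul_apply, Pi.pow_apply, smul_eq_mul, add_assoc]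
  filter_upwards [condExp_add (integrable_const 1) ((hYi.smul l).add (hY2.smul c)) m,
    condExp_add (hYi.smul l) (hY2.smul c) m, condExp_smul l Y m, condExp_smul c (Y ^ 2) m, hY0]
    with ω h1 h2 h3 h4 h5
  rw [hq, h1, Pi.add_apply, condExp_const hm, h2, Pi.add_apply, h3, h4]
  simp only [Pi.smul_apply, smul_eq_mul, h5, Pi.zero_apply, mul_zero, zero_add]

theorem integral_mul_exp_le_integral_mul_one_add_condExp_sq [IsFiniteMeasure μ] (hm : m ≤ m0)
    {g Y : Ω → ℝ} {B l c r : ℝ} (hexp : ∀ x ≤ r, exp (l * x) ≤ 1 + l * x + c * x ^ 2)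
    (hg : StronglyMeasurable[m] g) (hg0 : 0 ≤ g) (hgB : ∀ᵐ ω ∂μ, ‖g ω‖ ≤ B)
    (hY : MemLp Y 2 μ) (hY0 : μ[Y|m] =ᵐ[μ] 0) (hYr : ∀ᵐ ω ∂μ, g ω ≠ 0 → Y ω ≤ r) :
    ∫ ω, g ω * exp (l * Y ω) ∂μ ≤ ∫ ω, g ω * (1 + c * μ[Y ^ 2|m] ω) ∂μ := by
  have hqi : Integrable (fun ω => 1 + l * Y ω + c * Y ω ^ 2) μ :=
    ((integrable_const 1).add ((hY.integrable one_le_two).const_mul l)).add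
      (hY.integrable_sq.const_mul c)
  calc ∫ ω, g ω * exp (l * Y ω) ∂μ ≤ ∫ ω, g ω * (1 + l * Y ω + c * Y ω ^ 2) ∂μ := by
        refine integral_mono_of_nonneg (ae_of_all _ fun ω => mul_nonneg (hg0 ω) (exp_pos _).le)
          (hqi.bdd_mul (hg.mono hm).aestronglyMeasurable hgB) ?_
        filter_upwards [hYr] with ω hω
        by_cases hgω : g ω = 0
        · simp [hgω]
        · exact mul_le_mul_of_nonneg_left (hexp _ (hω hgω)) (hg0 ω)
    _ = ∫ ω, g ω * (1 + c * μ[Y ^ 2|m] ω) ∂μ := by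
        rw [← integral_mul_condExp_of_bound hm hg hqi B hgB]
        exact integral_congr_ae ((condExp_one_add_mul_add_mul_sq hm hY hY0 l c).mono
          fun ω hω => by dsimp only; rw [hω])

lemma integral_mul_bernsteinFactor_le [IsFiniteMeasure μ] (hm : m ≤ m0) {h Y ρ : Ω → ℝ}
    {B l c r : ℝ} (hc : 0 ≤ c) (hexp : ∀ x ≤ r, exp (l * x) ≤ 1 + l * x + c * x ^ 2)
    (hh : StronglyMeasurable[m] h) (hh0 : 0 ≤ h) (hhB : ∀ᵐ ω ∂μ, h ω ≤ B)
    (hY : MemLp Y 2 μ) (hY0 : μ[Y|m] =ᵐ[μ] 0) (hρ : StronglyMeasurable[m] ρ)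
    (hYρ : ∀ᵐ ω ∂μ, Y ω ≤ ρ ω) :
    ∫ ω, h ω * bernsteinFactor μ m Y ρ l c r ω ∂μ ≤ ∫ ω, h ω ∂μ := by
  set W := μ[Y ^ 2|m]
  have hcW : ∀ᵐ ω ∂μ, 0 ≤ c * W ω :=
    (condExp_nonneg (ae_of_all _ fun ω => sq_nonneg (Y ω))).mono fun ω hω => mul_nonneg hc hω
  set g : Ω → ℝ := {ω | ρ ω ≤ r}.indicator fun ω => h ω * exp (-(c * W ω))
  have hg0 : 0 ≤ g := Set.indicator_nonneg fun ω _ => mul_nonneg (hh0 ω) (exp_pos _).le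
  have hgh : ∀ ω, g ω ≤ h ω * exp (-(c * W ω)) :=
    Set.indicator_le_self' fun ω _ => mul_nonneg (hh0 ω) (exp_pos _).le
  have hgB : ∀ᵐ ω ∂μ, ‖g ω‖ ≤ B := by
    filter_upwards [hhB, hcW] with ω hhω hcWω
    rw [Real.norm_of_nonneg (hg0 ω)]
    exact (hgh ω).trans
      ((mul_le_of_le_one_right (hh0 ω) (exp_le_one_iff.2 (by linarith))).trans hhω)
  have hYr : ∀ᵐ ω ∂μ, g ω ≠ 0 → Y ω ≤ r := by
    filter_upwards [hYρ] with ω hYω hgω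
    exact hYω.trans (Set.mem_of_indicator_ne_zero (s := {ω | ρ ω ≤ r}) hgω)
  have hfactor : ∀ ω, h ω * bernsteinFactor μ m Y ρ l c r ω = g ω * exp (l * Y ω) := by
    intro ω
    by_cases hω : ω ∈ {ω | ρ ω ≤ r}
    · simp only [g, bernsteinFactor, Set.indicator_of_mem hω]
      rw [sub_eq_add_neg, exp_add, mul_right_comm, mul_assoc, mul_comm (exp _)]
    · simp only [g, bernsteinFactor, Set.indicator_of_notMem hω, mul_zero, zero_mul]
  calc ∫ ω, h ω * bernsteinFactor μ m Y ρ l c r ω ∂μ = ∫ ω, g ω * exp (l * Y ω) ∂μ := by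
        simp_rw [hfactor]
    _ ≤ ∫ ω, g ω * (1 + c * W ω) ∂μ :=
        integral_mul_exp_le_integral_mul_one_add_condExp_sq hm hexp
          ((hh.mul (continuous_exp.comp_stronglyMeasurable
            (stronglyMeasurable_condExp.const_mul c).neg)).indicator
            (hρ.measurable measurableSet_Iic)) hg0 hgB hY hY0 hYr
    _ ≤ ∫ ω, h ω ∂μ := by
        refine integral_mono_of_nonneg ?_ ?_ ?_
        · filter_upwards [hcW] with ω hω using mul_nonneg (hg0 ω) (by linarith)
        · refine Integrable.of_bound (hh.mono hm).aestronglyMeasurable B ?_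
          filter_upwards [hhB] with ω hω
          rwa [Real.norm_of_nonneg (hh0 ω)]
        · filter_upwards [hcW] with ω hω
          calc g ω * (1 + c * W ω) ≤ h ω * exp (-(c * W ω)) * exp (c * W ω) :=
                mul_le_mul (hgh ω) (by linarith [add_one_le_exp (c * W ω)]) (by linarith)
                  (mul_nonneg (hh0 ω) (exp_pos _).le)
            _ = h ω := by rw [mul_assoc, ← exp_add, neg_add_cancel, exp_zero, mul_one]

/-- `∏_{t=1}^k 𝟙{R_t ≤ r} exp (l X_t - c E[X_t² | ℱ_{t-1}])`. The predictable indicators make the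
bound `X_t ≤ r` available wherever a factor is nonzero. -/
def bernsteinProcess (μ : Measure Ω) (ℱ : Filtration ℕ m0) (X R : ℕ → Ω → ℝ) (l c r : ℝ)
    (k : ℕ) (ω : Ω) : ℝ :=
  ∏ t ∈ Icc 1 k, bernsteinFactor μ (ℱ (t - 1)) (X t) (R t) l c r ω

variable {ℱ : Filtration ℕ m0} {X R : ℕ → Ω → ℝ} {l c r : ℝ}

lemma bernsteinProcess_zero (ω : Ω) : bernsteinProcess μ ℱ X R l c r 0 ω = 1 := by
  simp [bernsteinProcess]

lemma bernsteinProcess_succ (k : ℕ) (ω : Ω) :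
    bernsteinProcess μ ℱ X R l c r (k + 1) ω =
      bernsteinProcess μ ℱ X R l c r k ω *
        bernsteinFactor μ (ℱ k) (X (k + 1)) (R (k + 1)) l c r ω :=
  prod_Icc_succ_top (Nat.le_add_left 1 k) _

lemma bernsteinProcess_nonneg (k : ℕ) (ω : Ω) : 0 ≤ bernsteinProcess μ ℱ X R l c r k ω :=
  prod_nonneg fun _ _ => bernsteinFactor_nonneg ω

lemma bernsteinProcess_eq_exp {k : ℕ} {ω : Ω} (hω : ∀ t ∈ Icc 1 k, R t ω ≤ r) :
    bernsteinProcess μ ℱ X R l c r k ω =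
      exp (l * ∑ t ∈ Icc 1 k, X t ω - c * ∑ t ∈ Icc 1 k, μ[X t ^ 2|ℱ (t - 1)] ω) := by
  rw [mul_sum, mul_sum, ← sum_sub_distrib, exp_sum]
  exact prod_congr rfl fun t ht => Set.indicator_of_mem (s := {ω | R t ω ≤ r}) (hω t ht) _

lemma stronglyMeasurable_bernsteinProcess {k : ℕ} (hX : ∀ t, StronglyMeasurable[ℱ t] (X t))
    (hR : ∀ t ∈ Icc 1 k, StronglyMeasurable[ℱ (t - 1)] (R t)) :
    StronglyMeasurable[ℱ k] (bernsteinProcess μ ℱ X R l c r k) :=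
  Finset.stronglyMeasurable_fun_prod _ fun t ht =>
    (stronglyMeasurable_bernsteinFactor (ℱ.mono (Nat.sub_le t 1)) (hX t) (hR t ht)).mono
      (ℱ.mono (mem_Icc.1 ht).2)

lemma ae_bernsteinProcess_le {k : ℕ} (hl : 0 ≤ l) (hc : 0 ≤ c)
    (hXR : ∀ t ∈ Icc 1 k, ∀ᵐ ω ∂μ, X t ω ≤ R t ω) :
    ∀ᵐ ω ∂μ, bernsteinProcess μ ℱ X R l c r k ω ≤ exp (l * r) ^ k := by
  have h := (Filter.eventually_all_finset _).2 fun t ht =>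
    ae_bernsteinFactor_le (m := ℱ (t - 1)) (r := r) hl hc (hXR t ht)
  filter_upwards [h] with ω hω
  calc bernsteinProcess μ ℱ X R l c r k ω ≤ ∏ t ∈ Icc 1 k, exp (l * r) :=
        prod_le_prod (fun _ _ => bernsteinFactor_nonneg ω) hω
    _ = exp (l * r) ^ k := by rw [prod_const, Nat.card_Icc, Nat.add_sub_cancel]

theorem integral_bernsteinProcess_le_one [IsProbabilityMeasure μ] (hl : 0 ≤ l) (hc : 0 ≤ c)
    (hexp : ∀ x ≤ r, exp (l * x) ≤ 1 + l * x + c * x ^ 2) (hX : ∀ t, StronglyMeasurable[ℱ t] (X t))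
    (hX2 : ∀ t, MemLp (X t) 2 μ) (k : ℕ) (hmds : ∀ t ∈ Icc 1 k, μ[X t|ℱ (t - 1)] =ᵐ[μ] 0)
    (hR : ∀ t ∈ Icc 1 k, StronglyMeasurable[ℱ (t - 1)] (R t))
    (hXR : ∀ t ∈ Icc 1 k, ∀ᵐ ω ∂μ, X t ω ≤ R t ω) :
    ∫ ω, bernsteinProcess μ ℱ X R l c r k ω ∂μ ≤ 1 := by
  induction k with
  | zero => simp [bernsteinProcess_zero]
  | succ k ih =>
    have hsub : Icc 1 k ⊆ Icc 1 (k + 1) := Icc_subset_Icc_right k.le_succ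
    have hk : k + 1 ∈ Icc 1 (k + 1) := right_mem_Icc.2 (Nat.le_add_left 1 k)
    simp_rw [bernsteinProcess_succ]
    refine (integral_mul_bernsteinFactor_le (ℱ.le k) hc hexp
      (stronglyMeasurable_bernsteinProcess hX fun t ht => hR t (hsub ht))
      (bernsteinProcess_nonneg k) (ae_bernsteinProcess_le hl hc fun t ht => hXR t (hsub ht))
      (hX2 (k + 1)) (hmds (k + 1) hk) (hR (k + 1) hk) (hXR (k + 1) hk)).trans ?_
    exact ih (fun t ht => hmds t (hsub ht)) (fun t ht => hR t (hsub ht))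
      (fun t ht => hXR t (hsub ht))

theorem measure_sum_ge_le_exp_neg [IsProbabilityMeasure μ] (hl : 0 ≤ l) (hc : 0 ≤ c)
    (hexp : ∀ x ≤ r, exp (l * x) ≤ 1 + l * x + c * x ^ 2) (hX : ∀ t, StronglyMeasurable[ℱ t] (X t))
    (hX2 : ∀ t, MemLp (X t) 2 μ) (n : ℕ) (hmds : ∀ t ∈ Icc 1 n, μ[X t|ℱ (t - 1)] =ᵐ[μ] 0)
    (hR : ∀ t ∈ Icc 1 n, StronglyMeasurable[ℱ (t - 1)] (R t))
    (hXR : ∀ t ∈ Icc 1 n, ∀ᵐ ω ∂μ, X t ω ≤ R t ω) (ε v : ℝ) :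
    μ {ω | ε ≤ ∑ t ∈ Icc 1 n, X t ω ∧ ∑ t ∈ Icc 1 n, μ[X t ^ 2|ℱ (t - 1)] ω ≤ v ∧
        ∀ t ∈ Icc 1 n, R t ω ≤ r} ≤ ENNReal.ofReal (exp (-(l * ε - c * v))) := by
  have hsub : {ω | ε ≤ ∑ t ∈ Icc 1 n, X t ω ∧ ∑ t ∈ Icc 1 n, μ[X t ^ 2|ℱ (t - 1)] ω ≤ v ∧
      ∀ t ∈ Icc 1 n, R t ω ≤ r} ⊆
      {ω | exp (l * ε - c * v) ≤ bernsteinProcess μ ℱ X R l c r n ω} := by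
    rintro ω ⟨hS, hV, hRr⟩
    rw [Set.mem_ofPred_eq, bernsteinProcess_eq_exp hRr, exp_le_exp]
    nlinarith [mul_le_mul_of_nonneg_left hS hl, mul_le_mul_of_nonneg_left hV hc]
  have hMi : Integrable (bernsteinProcess μ ℱ X R l c r n) μ := Integrable.of_bound
    ((stronglyMeasurable_bernsteinProcess hX hR).mono (ℱ.le n)).aestronglyMeasurable _
    ((ae_bernsteinProcess_le hl hc hXR).mono fun ω hω => by
      rwa [Real.norm_of_nonneg (bernsteinProcess_nonneg n ω)])
  have hmarkov := mul_meas_ge_le_integral_of_nonneg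
    (ae_of_all _ (bernsteinProcess_nonneg n)) hMi (exp (l * ε - c * v))
  refine (measure_mono hsub).trans
    ((ENNReal.le_ofReal_iff_toReal_le (measure_ne_top μ _) (exp_pos _).le).2 ?_)
  rw [exp_neg, ← one_div, le_div_iff₀' (exp_pos _), ← measureReal_def]
  exact hmarkov.trans (integral_bernsteinProcess_le_one hl hc hexp hX hX2 n hmds hR hXR)

end Bernstein

/-- Martingale (Freedman-style) Bernstein inequality with predictable random range
bounds: if `E[X_t | F_{t-1}] = 0`, `X_t ≤ R_t` a.s. with `R_t` `F_{t-1}`-measurable,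
`R = max_{t ≤ n} R_t` and `V² = ∑_{t=1}^n Var[X_t | F_{t-1}]`, then for `ε, r, v > 0`,
`P[∑ X_t ≥ ε, V² ≤ v, R ≤ r] ≤ exp(-ε²/(2v + 2εr/3))`. -/
theorem stmt6 {Ω : Type*} {m0 : MeasurableSpace Ω} (μ : Measure Ω) [IsProbabilityMeasure μ]
    (ℱ : Filtration ℕ m0) (n : ℕ) (hn : 1 ≤ n) (X R : ℕ → Ω → ℝ)
    (hadapted : ∀ t, StronglyMeasurable[ℱ t] (X t))
    (hint : ∀ t, MemLp (X t) 2 μ)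
    (hmds : ∀ t ∈ Icc 1 n, μ[X t|ℱ (t - 1)] =ᵐ[μ] 0)
    (hR : ∀ t ∈ Icc 1 n, StronglyMeasurable[ℱ (t - 1)] (R t))
    (hXR : ∀ t ∈ Icc 1 n, ∀ᵐ ω ∂μ, X t ω ≤ R t ω)
    (ε r v : ℝ) (hε : 0 < ε) (hr : 0 < r) (hv : 0 < v) :
    μ {ω | ε ≤ ∑ t ∈ Icc 1 n, X t ω ∧
        (∑ t ∈ Icc 1 n, (μ[X t ^ 2|ℱ (t - 1)]) ω) ≤ v ∧
        ((Icc 1 n).sup' (Finset.nonempty_Icc.mpr hn) fun t => R t ω) ≤ r}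
      ≤ ENNReal.ofReal (exp (-(ε ^ 2 / (2 * v + 2 * ε * r / 3)))) := by
  set l := 3 * ε / (3 * v + ε * r)
  have hl : 0 ≤ l := by positivity
  have hlr : l * r < 3 := by
    rw [div_mul_eq_mul_div, div_lt_iff₀ (by positivity)]
    nlinarith
  have hexp : ∀ x ≤ r, exp (l * x) ≤ 1 + l * x + 3 / (2 * (3 - l * r)) * l ^ 2 * x ^ 2 :=
    fun x hx => by
      have := Real.exp_le_one_add_add_mul_sq (mul_le_mul_of_nonneg_left hx hl) (by positivity) hlr
      linarith
  have hbound := measure_sum_ge_le_exp_neg hl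
    (mul_nonneg (div_nonneg zero_le_three (by linarith)) (sq_nonneg l)) hexp hadapted hint n
    hmds hR hXR ε v
  simp_rw [Finset.sup'_le_iff]
  convert hbound using 4
  rw [show 3 - l * r = 9 * v / (3 * v + ε * r) by simp only [l]; field_simp; ring]
  simp only [l]
  field_simp
  ring
end

section
/- For any $\nu > 0$, $\min\{1,\nu\} \cdot \sum_{t=1}^{\infty} 2^t \,(1 - \min\{1, 2^{-t}/\nu\}) \prod_{s=1}^{t-1} \min\{1, 2^{-s}/\nu\} \leq 4$. -/
/-!
Write `a_s = min{1, 2⁻ˢ/ν}`, `P_t = a_1 ⋯ a_t` and `g_t = 2ᵗ P_t`. Summation by parts bounds the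
sum by `1 + ∑ g_t`, and `g_{t+1} = 2 a_{t+1} g_t ≤ g_t / (2ᵗ ν)`. Choose `k` with `x = 2ᵏ ν ≥ 1`
and `min{1,ν} 2ᵏ ≤ 2` (`k = 0` if `ν ≥ 1`, otherwise `x ∈ (1, 2]`). After multiplying by
`min{1,ν}`, the leading `1` and the terms `t < k` contribute at most `min{1,ν} 2ᵏ ≤ min{x, 2}`,
the term `t = k` at most `1`, and the terms `t > k` decay geometrically from `1/x` with ratio
`1/2`, so the total is at most `min{x, 2} + 1 + 2/x ≤ 4`.
-/

open Finset

namespace Halving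

noncomputable def successProb (ν : ℝ) (s : ℕ) : ℝ := min 1 ((2 : ℝ)⁻¹ ^ s / ν)

noncomputable def survivalProb (ν : ℝ) (t : ℕ) : ℝ := ∏ s ∈ Icc 1 t, successProb ν s

variable {ν : ℝ}

lemma successProb_nonneg (hν : 0 ≤ ν) (s : ℕ) : 0 ≤ successProb ν s :=
  le_min zero_le_one (by positivity)

lemma successProb_le_one (s : ℕ) : successProb ν s ≤ 1 := min_le_left _ _

lemma successProb_le (s : ℕ) : successProb ν s ≤ (2 : ℝ)⁻¹ ^ s / ν := min_le_right _ _

@[simp]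
lemma survivalProb_zero : survivalProb ν 0 = 1 := by simp [survivalProb]

lemma survivalProb_succ (t : ℕ) :
    survivalProb ν (t + 1) = survivalProb ν t * successProb ν (t + 1) :=
  prod_Icc_succ_top (Nat.le_add_left 1 t) _

lemma survivalProb_nonneg (hν : 0 ≤ ν) (t : ℕ) : 0 ≤ survivalProb ν t :=
  prod_nonneg fun s _ => successProb_nonneg hν s

lemma survivalProb_le_one (hν : 0 ≤ ν) (t : ℕ) : survivalProb ν t ≤ 1 :=
  prod_le_one (fun s _ => successProb_nonneg hν s) fun s _ => successProb_le_one s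

lemma sum_range_two_pow_mul_one_sub_mul_prod {R : Type*} [CommRing R] (a : ℕ → R) (N : ℕ) :
    ∑ t ∈ range N, 2 ^ (t + 1) * (1 - a (t + 1)) * ∏ s ∈ Icc 1 t, a s
        + 2 ^ N * ∏ s ∈ Icc 1 N, a s
      = 1 + ∑ t ∈ range N, 2 ^ t * ∏ s ∈ Icc 1 t, a s := by
  induction N with
  | zero => simp
  | succ N ih =>
    rw [sum_range_succ, sum_range_succ, prod_Icc_succ_top (Nat.le_add_left 1 N)]
    linear_combination ih

lemma sum_range_two_pow_mul_stopping_le (hν : 0 ≤ ν) (N : ℕ) :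
    ∑ t ∈ range N, 2 ^ (t + 1) * (1 - successProb ν (t + 1)) * survivalProb ν t
      ≤ 1 + ∑ t ∈ range N, 2 ^ t * survivalProb ν t := by
  have habel := sum_range_two_pow_mul_one_sub_mul_prod (successProb ν) N
  have hrem : 0 ≤ (2 : ℝ) ^ N * survivalProb ν N :=
    mul_nonneg (by positivity) (survivalProb_nonneg hν N)
  unfold survivalProb at hrem ⊢
  linarith

lemma two_pow_mul_survivalProb_succ_le_div {c : ℝ} (hc : 0 < c) {t : ℕ} (hct : c ≤ 2 ^ t * ν) :
    2 ^ (t + 1) * survivalProb ν (t + 1) ≤ 2 ^ t * survivalProb ν t / c := by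
  have hν : 0 ≤ ν := (pos_of_mul_pos_right (hc.trans_le hct) (by positivity)).le
  have hP := survivalProb_nonneg hν t
  calc 2 ^ (t + 1) * survivalProb ν (t + 1)
      = 2 ^ (t + 1) * survivalProb ν t * successProb ν (t + 1) := by
        rw [survivalProb_succ, mul_assoc]
    _ ≤ 2 ^ (t + 1) * survivalProb ν t * ((2 : ℝ)⁻¹ ^ (t + 1) / ν) := by
        gcongr
        exact successProb_le _
    _ = 2 ^ t * survivalProb ν t / (2 ^ t * ν) := by
        rw [inv_pow]
        field_simp
    _ ≤ 2 ^ t * survivalProb ν t / c := by gcongr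

lemma min_one_mul_two_pow_mul_survivalProb_le_one (hν : 0 < ν) (t : ℕ) :
    min 1 ν * (2 ^ t * survivalProb ν t) ≤ 1 := by
  cases t with
  | zero => simp
  | succ t =>
    have hstep := two_pow_mul_survivalProb_succ_le_div (mul_pos (pow_pos two_pos t) hν) le_rfl
    rw [mul_div_mul_left _ _ (by positivity)] at hstep
    calc min 1 ν * (2 ^ (t + 1) * survivalProb ν (t + 1))
        ≤ ν * (survivalProb ν t / ν) := by
          gcongr
          exacts [mul_nonneg (by positivity) (survivalProb_nonneg hν.le _), min_le_right 1 ν]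
      _ ≤ 1 := by
        rw [mul_div_cancel₀ _ hν.ne']
        exact survivalProb_le_one hν.le t

lemma min_one_mul_two_pow_mul_survivalProb_le_geometric (hν : 0 < ν) {k : ℕ}
    (hk : 1 ≤ 2 ^ k * ν) (i : ℕ) :
    min 1 ν * (2 ^ (k + 1 + i) * survivalProb ν (k + 1 + i)) ≤ (2 ^ k * ν)⁻¹ * (1 / 2) ^ i := by
  induction i with
  | zero =>
    calc min 1 ν * (2 ^ (k + 1) * survivalProb ν (k + 1))
        ≤ min 1 ν * (2 ^ k * survivalProb ν k / (2 ^ k * ν)) := by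
          gcongr
          exact two_pow_mul_survivalProb_succ_le_div (by linarith) le_rfl
      _ ≤ (2 ^ k * ν)⁻¹ * (1 / 2) ^ 0 := by
        rw [mul_div_assoc', div_eq_inv_mul, pow_zero, mul_one]
        exact mul_le_of_le_one_right (by positivity)
          (min_one_mul_two_pow_mul_survivalProb_le_one hν k)
  | succ i ih =>
    have h2 : (2 : ℝ) ≤ 2 ^ (k + 1 + i) * ν := by
      calc (2 : ℝ) ≤ 2 ^ (1 + i) * (2 ^ k * ν) := by
            simpa using
              mul_le_mul (le_self_pow₀ one_le_two (by omega)) hk zero_le_one (by positivity)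
        _ = 2 ^ (k + 1 + i) * ν := by ring
    calc min 1 ν * (2 ^ (k + 1 + i + 1) * survivalProb ν (k + 1 + i + 1))
        ≤ min 1 ν * (2 ^ (k + 1 + i) * survivalProb ν (k + 1 + i) / 2) := by
          gcongr
          exact two_pow_mul_survivalProb_succ_le_div two_pos h2
      _ ≤ (2 ^ k * ν)⁻¹ * (1 / 2) ^ (i + 1) := by
        rw [mul_div_assoc', pow_succ]
        linarith

lemma exists_one_le_two_pow_mul_and_min_one_mul_two_pow_le_two (hν : 0 < ν) :
    ∃ k : ℕ, 1 ≤ 2 ^ k * ν ∧ min 1 ν * 2 ^ k ≤ 2 := by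
  rcases le_or_gt 1 ν with h1 | h1
  · exact ⟨0, by simpa using h1, by simp⟩
  obtain ⟨n, hlow, hhigh⟩ :=
    exists_nat_pow_near_of_lt_one hν h1.le (by norm_num : (0 : ℝ) < 1 / 2) (by norm_num)
  refine ⟨n + 1, ?_, ?_⟩
  · calc (1 : ℝ) = 2 ^ (n + 1) * (1 / 2) ^ (n + 1) := by rw [← mul_pow]; norm_num
      _ ≤ 2 ^ (n + 1) * ν := by gcongr
  · calc min 1 ν * 2 ^ (n + 1) ≤ (1 / 2) ^ n * 2 ^ (n + 1) := by
          gcongr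
          exact (min_le_right 1 ν).trans hhigh
      _ = 2 := by rw [pow_succ, ← mul_assoc, ← mul_pow]; norm_num

lemma add_two_div_le_three {c x : ℝ} (hx : 1 ≤ x) (hcx : c ≤ x) (hc : c ≤ 2) : c + 2 / x ≤ 3 := by
  rw [← le_sub_iff_add_le', div_le_iff₀ (by linarith)]
  rcases le_total x 2 with h | h <;> nlinarith

lemma min_one_mul_one_add_sum_range_two_pow_mul_survivalProb_le_four (hν : 0 < ν) (N : ℕ) :
    min 1 ν * (1 + ∑ t ∈ range N, 2 ^ t * survivalProb ν t) ≤ 4 := by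
  obtain ⟨k, hk, hk2⟩ := exists_one_le_two_pow_mul_and_min_one_mul_two_pow_le_two hν
  have hg : ∀ t, 0 ≤ (2 : ℝ) ^ t * survivalProb ν t :=
    fun t => mul_nonneg (by positivity) (survivalProb_nonneg hν.le t)
  have hhead : min 1 ν * (1 + ∑ t ∈ range k, 2 ^ t * survivalProb ν t) ≤ min 1 ν * 2 ^ k := by
    gcongr
    calc 1 + ∑ t ∈ range k, 2 ^ t * survivalProb ν t ≤ 1 + ∑ t ∈ range k, (2 : ℝ) ^ t := by
          gcongr with t
          exact mul_le_of_le_one_right (by positivity) (survivalProb_le_one hν.le t)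
      _ = 2 ^ k := by
          have := geom_sum_mul_add (1 : ℝ) k
          norm_num at this
          linarith
  have hmid := min_one_mul_two_pow_mul_survivalProb_le_one hν k
  have htail : min 1 ν * ∑ i ∈ range N, 2 ^ (k + 1 + i) * survivalProb ν (k + 1 + i)
      ≤ 2 / (2 ^ k * ν) := by
    calc min 1 ν * ∑ i ∈ range N, 2 ^ (k + 1 + i) * survivalProb ν (k + 1 + i)
        ≤ ∑ i ∈ range N, (2 ^ k * ν)⁻¹ * (1 / 2) ^ i := by
          rw [mul_sum]
          exact sum_le_sum fun i _ => min_one_mul_two_pow_mul_survivalProb_le_geometric hν hk i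
      _ ≤ (2 ^ k * ν)⁻¹ * 2 := by
          rw [← mul_sum]
          gcongr
          exact sum_geometric_two_le N
      _ = 2 / (2 ^ k * ν) := inv_mul_eq_div _ _
  have hcx : min 1 ν * 2 ^ k ≤ 2 ^ k * ν := by
    rw [mul_comm]
    gcongr
    exact min_le_right 1 ν
  calc min 1 ν * (1 + ∑ t ∈ range N, 2 ^ t * survivalProb ν t)
      ≤ min 1 ν * (1 + ∑ t ∈ range (k + 1 + N), 2 ^ t * survivalProb ν t) := by
        gcongr
        · exact fun t _ _ => hg t
        · omega
    _ = min 1 ν * (1 + ∑ t ∈ range k, 2 ^ t * survivalProb ν t)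
          + min 1 ν * (2 ^ k * survivalProb ν k)
          + min 1 ν * ∑ i ∈ range N, 2 ^ (k + 1 + i) * survivalProb ν (k + 1 + i) := by
        rw [sum_range_add, sum_range_succ]
        ring
    _ ≤ 4 := by linarith [add_two_div_le_three hk hcx hk2]

end Halving

open Halving in
/-- The expected ratio `min{1,ν}/ν̲₀` of the halving initialisation is at most `4`:
the procedure stops at step `t` (allocating `2⁻ᵗ`) with probability
`(1 - min{1,2⁻ᵗ/ν}) ∏_{s<t} min{1,2⁻ˢ/ν}`, returning `ν̲₀ = 2⁻ᵗ`.
(The outer sum over `t ≥ 1` is indexed by `t = t' + 1`, `t' : ℕ`.) -/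
theorem stmt8 (ν : ℝ) (hν : 0 < ν) :
    min 1 ν * ∑' t : ℕ, (2 : ℝ) ^ (t + 1) *
        (1 - min 1 ((2 : ℝ)⁻¹ ^ (t + 1) / ν)) *
        ∏ s ∈ Icc 1 t, min 1 ((2 : ℝ)⁻¹ ^ s / ν) ≤ 4 := by
  change min 1 ν * ∑' t : ℕ, 2 ^ (t + 1) * (1 - successProb ν (t + 1)) * survivalProb ν t ≤ 4
  have hm : 0 < min 1 ν := lt_min one_pos hν
  have hterm : ∀ t, 0 ≤ (2 : ℝ) ^ (t + 1) * (1 - successProb ν (t + 1)) * survivalProb ν t :=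
    fun t => mul_nonneg (mul_nonneg (by positivity) (sub_nonneg.2 (successProb_le_one _)))
      (survivalProb_nonneg hν.le t)
  have hpartial : ∀ N, ∑ t ∈ range N, 2 ^ (t + 1) * (1 - successProb ν (t + 1)) * survivalProb ν t
      ≤ 4 / min 1 ν := fun N => by
    rw [le_div_iff₀' hm]
    exact (mul_le_mul_of_nonneg_left (sum_range_two_pow_mul_stopping_le hν.le N) hm.le).trans
      (min_one_mul_one_add_sum_range_two_pow_mul_survivalProb_le_four hν N)
  calc _ ≤ min 1 ν * (4 / min 1 ν) :=
        mul_le_mul_of_nonneg_left (Real.tsum_le_of_sum_range_le hterm hpartial) hm.le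
    _ = 4 := mul_div_cancel₀ 4 hm.ne'
end
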